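/- There exists a universal constant C > 0 such that the following holds. Let n be a positive integer, let μ_1, …, μ_n ∈ ℝ, and let σ_1, …, σ_n ≥ 0 and σ'_1, …, σ'_n ≥ 0. Let X_1, …, X_n be independent random variables with X_i Gaussian with mean μ_i and variance σ_i², and let Y_1, …, Y_n be independent random variables with Y_i Gaussian with mean μ_i and variance σ'_i². Then |E[max_{i∈[n]} X_i] − E[max_{i∈[n]} Y_i]| ≤ C · Σ_{i=1}^n |σ_i − σ'_i|. -/

import Mathlib

/-!
Realize both families on one probability space: if `Z` is a standard Gaussian vector,
then `(μ i + σ i * Z i)ᵢ` has the law of `X` and `(μ i + σ' i * Z i)ᵢ` that of `Y`.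
For real numbers `|max a - max b| ≤ ∑ i, |a i - b i|`, so the two maxima differ by at most
`∑ i, |σ i - σ' i| * |Z i|`, whose expectation is at most `∑ i, |σ i - σ' i|` because
`𝔼|Z i| ≤ (1 + 𝔼[Z i ^ 2]) / 2 = 1`. Hence `C = 1` works.
-/

open MeasureTheory ProbabilityTheory

section ciSup

variable {ι : Type*} [Fintype ι] [Nonempty ι]

lemma ciSup_sub_ciSup_le_sum_abs (a b : ι → ℝ) :
    (⨆ i, a i) - ⨆ i, b i ≤ ∑ i, |a i - b i| := by
  rw [sub_le_iff_le_add']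
  refine ciSup_le fun i => ?_
  calc a i ≤ b i + |a i - b i| := by linarith [le_abs_self (a i - b i)]
    _ ≤ (⨆ j, b j) + ∑ j, |a j - b j| :=
      add_le_add (le_ciSup (Set.finite_range b).bddAbove i)
        (Finset.single_le_sum (fun j _ => abs_nonneg (a j - b j)) (Finset.mem_univ i))

lemma abs_ciSup_sub_ciSup_le_sum_abs (a b : ι → ℝ) :
    |(⨆ i, a i) - ⨆ i, b i| ≤ ∑ i, |a i - b i| :=
  abs_sub_le_iff.2 ⟨ciSup_sub_ciSup_le_sum_abs a b, by
    simpa only [abs_sub_comm] using ciSup_sub_ciSup_le_sum_abs b a⟩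

lemma MeasureTheory.Integrable.ciSup {α : Type*} [MeasurableSpace α] {ν : Measure α}
    {f : ι → α → ℝ} (hf : ∀ i, Integrable (f i) ν) :
    Integrable (fun x => ⨆ i, f i x) ν := by
  refine (integrable_finsetSum Finset.univ fun i _ => (hf i).abs).mono'
    (AEMeasurable.iSup fun i => (hf i).aemeasurable).aestronglyMeasurable
    (Filter.Eventually.of_forall fun x => ?_)
  simpa using abs_ciSup_sub_ciSup_le_sum_abs (fun i => f i x) 0

end ciSup

lemma gaussianReal_eq_map_const_add_mul (m s : ℝ) :
    gaussianReal m (s ^ 2).toNNReal = (gaussianReal 0 1).map (fun z => m + s * z) := by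
  rw [show (fun z : ℝ => m + s * z) = (m + ·) ∘ (s * ·) from rfl,
    ← Measure.map_map (measurable_const_add m) (measurable_const_mul s),
    gaussianReal_map_const_mul, gaussianReal_map_const_add]
  congr 1
  · ring
  · ext
    simp [sq_nonneg]

lemma integral_abs_gaussianReal_le_one : ∫ x, |x| ∂gaussianReal 0 1 ≤ 1 := by
  have hsq : ∫ x, x ^ 2 ∂gaussianReal 0 1 = 1 := by
    simpa [variance_eq_integral measurable_id'.aemeasurable] using
      variance_fun_id_gaussianReal (μ := 0) (v := 1)
  have hint : Integrable (fun x : ℝ => x) (gaussianReal 0 1) :=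
    (memLp_id_gaussianReal 1).integrable le_rfl
  have hint_sq : Integrable (fun x : ℝ => x ^ 2) (gaussianReal 0 1) :=
    (memLp_id_gaussianReal 2).integrable_sq
  calc ∫ x, |x| ∂gaussianReal 0 1 ≤ ∫ x, (1 + x ^ 2) / 2 ∂gaussianReal 0 1 :=
        integral_mono hint.abs (((integrable_const 1).add hint_sq).div_const 2)
          fun x => by nlinarith [sq_abs x, sq_nonneg (|x| - 1)]
    _ = 1 := by
        rw [integral_div, integral_add (integrable_const 1) hint_sq, hsq]
        norm_num

section StandardGaussianVector

variable {ι : Type*} [Fintype ι]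

lemma integral_comp_eq_integral_pi_gaussianReal {Ω : Type*} [MeasurableSpace Ω]
    {P : Measure Ω} [IsProbabilityMeasure P] {X : ι → Ω → ℝ} (hX : ∀ i, Measurable (X i))
    (hind : iIndepFun X P)
    {μ σ : ι → ℝ} (hlaw : ∀ i, P.map (X i) = gaussianReal (μ i) (σ i ^ 2).toNNReal)
    {F : (ι → ℝ) → ℝ} (hF : Measurable F) :
    ∫ ω, F (fun i => X i ω) ∂P
      = ∫ z, F (fun i => μ i + σ i * z i) ∂Measure.pi fun _ : ι => gaussianReal 0 1 := by
  have haffine : Measurable fun (z : ι → ℝ) i => μ i + σ i * z i := by fun_prop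
  calc ∫ ω, F (fun i => X i ω) ∂P = ∫ x, F x ∂P.map (fun ω i => X i ω) :=
        (integral_map (by fun_prop) hF.aestronglyMeasurable).symm
    _ = ∫ x, F x ∂(Measure.pi fun _ : ι => gaussianReal 0 1).map
          (fun z i => μ i + σ i * z i) := by
        rw [hind.map_fun_eq_pi_map fun i => (hX i).aemeasurable]
        simp_rw [hlaw, gaussianReal_eq_map_const_add_mul]
        rw [← Measure.pi_map_pi (f := fun i z => μ i + σ i * z) fun i => by fun_prop]
    _ = _ := integral_map haffine.aemeasurable hF.aestronglyMeasurable

lemma abs_integral_ciSup_affine_sub_le [Nonempty ι] (μ σ σ' : ι → ℝ) :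
    |(∫ z, ⨆ i, μ i + σ i * z i ∂Measure.pi fun _ : ι => gaussianReal 0 1)
      - ∫ z, ⨆ i, μ i + σ' i * z i ∂Measure.pi fun _ : ι => gaussianReal 0 1|
      ≤ ∑ i, |σ i - σ' i| := by
  set γ := Measure.pi fun _ : ι => gaussianReal 0 1
  have hcoord : ∀ i, Integrable (fun z : ι → ℝ => z i) γ := fun i =>
    integrable_eval ((memLp_id_gaussianReal 1).integrable le_rfl)
  have hmax : ∀ τ : ι → ℝ, Integrable (fun z => ⨆ i, μ i + τ i * z i) γ := fun τ =>
    Integrable.ciSup fun i => (integrable_const _).add ((hcoord i).const_mul _)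
  have hdom : ∀ i, Integrable (fun z : ι → ℝ => |σ i - σ' i| * |z i|) γ := fun i =>
    (hcoord i).abs.const_mul _
  have habs : ∀ i, ∫ z, |z i| ∂γ = ∫ x, |x| ∂gaussianReal 0 1 := fun i =>
    integral_comp_eval (by fun_prop)
  calc _ = |∫ z, (⨆ i, μ i + σ i * z i) - ⨆ i, μ i + σ' i * z i ∂γ| := by
        rw [integral_sub (hmax σ) (hmax σ')]
    _ ≤ ∫ z, |(⨆ i, μ i + σ i * z i) - ⨆ i, μ i + σ' i * z i| ∂γ :=
        abs_integral_le_integral_abs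
    _ ≤ ∫ z, ∑ i, |σ i - σ' i| * |z i| ∂γ :=
        integral_mono ((hmax σ).sub (hmax σ')).abs (integrable_finsetSum _ fun i _ => hdom i)
          fun z => (abs_ciSup_sub_ciSup_le_sum_abs _ _).trans_eq <|
            Finset.sum_congr rfl fun i _ => by rw [add_sub_add_left_eq_sub, ← sub_mul, abs_mul]
    _ = ∑ i, |σ i - σ' i| * ∫ x, |x| ∂gaussianReal 0 1 := by
        simp only [integral_finsetSum _ fun i _ => hdom i, integral_const_mul, habs]
    _ ≤ ∑ i, |σ i - σ' i| := Finset.sum_le_sum fun i _ =>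
        mul_le_of_le_one_right (abs_nonneg _) integral_abs_gaussianReal_le_one

end StandardGaussianVector

theorem expected_max_lipschitz_in_stddev :
    ∃ C : ℝ, 0 < C ∧
      ∀ (n : ℕ), 0 < n →
      ∀ (Ω : Type) (_ : MeasurableSpace Ω) (P : Measure Ω), IsProbabilityMeasure P →
      ∀ (Ω' : Type) (_ : MeasurableSpace Ω') (P' : Measure Ω'), IsProbabilityMeasure P' →
      ∀ (μ σ σ' : Fin n → ℝ) (X : Fin n → Ω → ℝ) (Y : Fin n → Ω' → ℝ),
        (∀ i, 0 ≤ σ i) → (∀ i, 0 ≤ σ' i) →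
        (∀ i, Measurable (X i)) → (∀ i, Measurable (Y i)) →
        iIndepFun X P →
        iIndepFun Y P' →
        (∀ i, Measure.map (X i) P = gaussianReal (μ i) (Real.toNNReal ((σ i) ^ 2))) →
        (∀ i, Measure.map (Y i) P' = gaussianReal (μ i) (Real.toNNReal ((σ' i) ^ 2))) →
        |(∫ ω, ⨆ i, X i ω ∂P) - ∫ ω, ⨆ i, Y i ω ∂P'| ≤ C * ∑ i, |σ i - σ' i| := by
  refine ⟨1, one_pos, ?_⟩
  intro n hn Ω _ P _ Ω' _ P' _ μ σ σ' X Y _ _ hX hY hindX hindY hlawX hlawY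
  have : Nonempty (Fin n) := ⟨⟨0, hn⟩⟩
  have hmax : Measurable fun x : Fin n → ℝ => ⨆ i, x i := by fun_prop
  rw [one_mul, integral_comp_eq_integral_pi_gaussianReal hX hindX hlawX hmax,
    integral_comp_eq_integral_pi_gaussianReal hY hindY hlawY hmax]
  exact abs_integral_ciSup_affine_sub_le μ σ σ'
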